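/- arXiv:1704.04035 — 2 statements merged into one kernel-verified Lean document; each statement's English description precedes it below -/
import Mathlib

section
/- The density function φ of the Lax-curve parametrisation is twice continuously differentiable at the base pressure: let γ > 1, ρ_k > 0, p_k > 0 and μ² = (γ−1)/(γ+1), and define φ : (0, ∞) → ℝ by φ(σ) = ρ_k·(σ/p_k)^(1/γ) for σ ≤ p_k and φ(σ) = ρ_k·(σ + μ²p_k)/(μ²σ + p_k) for σ > p_k. Then φ is ContDiffAt of order 2 at σ = p_k (i.e., twice continuously differentiable at p_k). -/
/-!
Both branches of `φ` are smooth on `(0, ∞)`, and they have second-order contact at `p_k`: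
value `ρ_k`, slope `ρ_k / (γ p_k)` and second derivative `ρ_k (1 - γ) / (γ p_k)²` on either
side. The shock branch reproduces the slope and curvature of the isentrope because of the
identity `1 / γ = (1 - μ²) / (1 + μ²)`. A function glued at a point from two `Cⁿ` pieces whose
derivatives up to order `n` agree there is `Cⁿ`, by induction on `n`.
-/

/-- The density function `φ` of the Lax-curve parametrisation: isentropic rarefaction
branch for `σ ≤ p`, shock (Rankine–Hugoniot) branch for `σ > p`, based at density `ρ`
and pressure `p`, with `μ² = (γ−1)/(γ+1)`. -/
noncomputable def laxPhi (γ ρ p : ℝ) (σ : ℝ) : ℝ :=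
  if σ ≤ p then
    ρ * (σ / p) ^ (1 / γ)
  else
    ρ * (σ + ((γ - 1) / (γ + 1)) * p) / (((γ - 1) / (γ + 1)) * σ + p)

open Set Filter Topology

section Piecewise

variable {f g : ℝ → ℝ} {p x : ℝ}

theorem continuousAt_ite_le (hf : ContinuousAt f x) (hg : ContinuousAt g x) (h0 : f p = g p) :
    ContinuousAt (fun y => if y ≤ p then f y else g y) x := by
  rcases lt_trichotomy x p with hlt | rfl | hgt
  · refine hf.congr ?_
    filter_upwards [Iio_mem_nhds hlt] with y hy
    exact (if_pos hy.le).symm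
  · rw [continuousAt_iff_continuous_left_right]
    constructor
    · exact hf.continuousWithinAt.congr (fun y hy => if_pos hy) (if_pos le_rfl)
    · refine hg.continuousWithinAt.congr (fun y hy => ?_) (by simp [h0])
      rcases (mem_Ici.1 hy).eq_or_lt with rfl | h
      · simp [h0]
      · exact if_neg h.not_ge
  · refine hg.congr ?_
    filter_upwards [Ioi_mem_nhds hgt] with y hy
    exact (if_neg hy.not_ge).symm

theorem hasDerivAt_ite_le {f' g' : ℝ → ℝ} (hf : HasDerivAt f (f' x) x)
    (hg : HasDerivAt g (g' x) x) (h0 : f p = g p) (h1 : f' p = g' p) :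
    HasDerivAt (fun y => if y ≤ p then f y else g y) (if x ≤ p then f' x else g' x) x := by
  rcases lt_trichotomy x p with hlt | rfl | hgt
  · rw [if_pos hlt.le]
    refine hf.congr_of_eventuallyEq ?_
    filter_upwards [Iio_mem_nhds hlt] with y hy
    exact if_pos hy.le
  · rw [if_pos le_rfl, ← hasDerivWithinAt_univ, ← Iic_union_Ici]
    refine .union (hf.hasDerivWithinAt.congr (fun y hy => if_pos hy) (if_pos le_rfl)) ?_
    rw [h1]
    refine hg.hasDerivWithinAt.congr (fun y hy => ?_) (by simp [h0])
    rcases (mem_Ici.1 hy).eq_or_lt with rfl | h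
    · simp [h0]
    · exact if_neg h.not_ge
  · rw [if_neg hgt.not_ge]
    refine hg.congr_of_eventuallyEq ?_
    filter_upwards [Ioi_mem_nhds hgt] with y hy
    exact if_neg hy.not_ge

theorem contDiffOn_ite_le {s : Set ℝ} (hs : IsOpen s) :
    ∀ {n : ℕ} {f g : ℝ → ℝ}, ContDiffOn ℝ n f s → ContDiffOn ℝ n g s →
      (∀ k ≤ n, iteratedDeriv k f p = iteratedDeriv k g p) →
      ContDiffOn ℝ n (fun y => if y ≤ p then f y else g y) s
  | 0, f, g, hf, hg, h => by
    simp only [CharP.cast_eq_zero, contDiffOn_zero] at hf hg ⊢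
    intro x hx
    exact (continuousAt_ite_le ((hf x hx).continuousAt (hs.mem_nhds hx))
      ((hg x hx).continuousAt (hs.mem_nhds hx)) (by simpa using h 0 le_rfl)).continuousWithinAt
  | n + 1, f, g, hf, hg, h => by
    have hderiv : ∀ x ∈ s, HasDerivAt (fun y => if y ≤ p then f y else g y)
        (if x ≤ p then deriv f x else deriv g x) x := fun x hx =>
      hasDerivAt_ite_le
        ((hf.differentiableOn (by simp) x hx).differentiableAt (hs.mem_nhds hx)).hasDerivAt
        ((hg.differentiableOn (by simp) x hx).differentiableAt (hs.mem_nhds hx)).hasDerivAt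
        (by simpa using h 0 (by omega)) (by simpa using h 1 (by omega))
    have ih := contDiffOn_ite_le hs (hf.deriv_of_isOpen hs le_rfl) (hg.deriv_of_isOpen hs le_rfl)
      fun k hk => by simpa only [iteratedDeriv_succ'] using h (k + 1) (by omega)
    rw [Nat.cast_add_one, contDiffOn_succ_iff_deriv_of_isOpen hs]
    exact ⟨fun x hx => (hderiv x hx).differentiableAt.differentiableWithinAt, by simp,
      ih.congr fun x hx => (hderiv x hx).deriv⟩

end Piecewise

theorem iteratedDeriv_two_eq_of_hasDerivAt {f f' : ℝ → ℝ} {x f'' : ℝ}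
    (hf : ∀ᶠ y in 𝓝 x, HasDerivAt f (f' y) y) (hf' : HasDerivAt f' f'' x) :
    iteratedDeriv 2 f x = f'' := by
  have hderiv : deriv f =ᶠ[𝓝 x] f' := hf.mono fun y hy => hy.deriv
  rw [iteratedDeriv_succ, iteratedDeriv_one, hderiv.deriv_eq, hf'.deriv]

theorem hasDerivAt_const_mul_div_rpow (c r : ℝ) {p x : ℝ} (hp : p ≠ 0) (hx : x ≠ 0) :
    HasDerivAt (fun σ => c * (σ / p) ^ r) (c * r / p * (x / p) ^ (r - 1)) x :=
  ((((hasDerivAt_id' x).div_const p).rpow_const (Or.inl (div_ne_zero hx hp))).const_mul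
    c).congr_deriv (by ring)

theorem hasDerivAt_const_mul_add_div_affine (a b c d : ℝ) {x : ℝ} (hx : c * x + d ≠ 0) :
    HasDerivAt (fun σ => a * (σ + b) / (c * σ + d)) (a * (d - b * c) / (c * x + d) ^ 2) x :=
  ((((hasDerivAt_id' x).add_const b).const_mul a).fun_div
    (((hasDerivAt_id' x).const_mul c).add_const d) hx).congr_deriv (by ring)

theorem hasDerivAt_const_div_affine_sq (a c d : ℝ) {x : ℝ} (hx : c * x + d ≠ 0) :
    HasDerivAt (fun σ => a / (c * σ + d) ^ 2) (-(2 * c * a) / (c * x + d) ^ 3) x :=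
  ((hasDerivAt_const x a).fun_div ((((hasDerivAt_id' x).const_mul c).add_const d).fun_pow 2)
    (pow_ne_zero 2 hx)).congr_deriv (by norm_num; field_simp)

theorem deriv_const_mul_div_rpow_self (c r : ℝ) {p : ℝ} (hp : p ≠ 0) :
    deriv (fun σ => c * (σ / p) ^ r) p = c * r / p := by
  rw [(hasDerivAt_const_mul_div_rpow c r hp hp).deriv, div_self hp, Real.one_rpow, mul_one]

theorem iteratedDeriv_two_const_mul_div_rpow_self (c r : ℝ) {p : ℝ} (hp : p ≠ 0) :
    iteratedDeriv 2 (fun σ => c * (σ / p) ^ r) p = c * r * (r - 1) / p ^ 2 := by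
  have hderiv : ∀ᶠ σ in 𝓝 p, HasDerivAt (fun σ => c * (σ / p) ^ r)
      (c * r / p * (σ / p) ^ (r - 1)) σ :=
    (eventually_ne_nhds hp).mono fun σ hσ => hasDerivAt_const_mul_div_rpow c r hp hσ
  rw [iteratedDeriv_two_eq_of_hasDerivAt hderiv
    (hasDerivAt_const_mul_div_rpow (c * r / p) (r - 1) hp hp), div_self hp, Real.one_rpow]
  field_simp

theorem iteratedDeriv_two_const_mul_add_div_affine (a b c d : ℝ) {x : ℝ} (hx : c * x + d ≠ 0) :
    iteratedDeriv 2 (fun σ => a * (σ + b) / (c * σ + d)) x =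
      -(2 * c * (a * (d - b * c))) / (c * x + d) ^ 3 := by
  have hne : ∀ᶠ σ in 𝓝 x, c * σ + d ≠ 0 :=
    (continuous_const.mul continuous_id |>.add continuous_const).continuousAt.eventually_ne hx
  exact iteratedDeriv_two_eq_of_hasDerivAt
    (hne.mono fun σ hσ => hasDerivAt_const_mul_add_div_affine a b c d hσ)
    (hasDerivAt_const_div_affine_sq _ c d hx)

theorem laxPhi_contDiffAt_two_general
    (γ ρk pk : ℝ) (hγ : 1 < γ) (hp : 0 < pk) :
    ContDiffAt ℝ 2 (laxPhi γ ρk pk) pk := by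
  set m := (γ - 1) / (γ + 1) with hm_def
  have hm : 0 < m := div_pos (by linarith) (by linarith)
  have hγm : 1 / γ = (1 - m) / (1 + m) := by
    rw [div_eq_div_iff (by positivity) (by positivity), hm_def]
    field_simp
    ring
  have hden : ∀ σ ∈ Ioi (0 : ℝ), m * σ + pk ≠ 0 := fun σ hσ => (add_pos (mul_pos hm hσ) hp).ne'
  refine (contDiffOn_ite_le isOpen_Ioi ?_ ?_ ?_).contDiffAt (Ioi_mem_nhds hp)
  · exact contDiffOn_const.mul ((contDiffOn_id.div_const pk).rpow_const_of_ne
      fun σ hσ => div_ne_zero (ne_of_gt hσ) hp.ne')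
  · exact (contDiffOn_const.mul (contDiffOn_id.add contDiffOn_const)).div
      ((contDiffOn_const.mul contDiffOn_id).add contDiffOn_const) hden
  intro k hk
  interval_cases k
  · rw [iteratedDeriv_zero, iteratedDeriv_zero, ← hm_def, div_self hp.ne', Real.one_rpow]
    field_simp
    ring
  · rw [iteratedDeriv_one, iteratedDeriv_one, ← hm_def, deriv_const_mul_div_rpow_self _ _ hp.ne',
      (hasDerivAt_const_mul_add_div_affine _ _ _ _ (hden pk hp)).deriv, hγm]
    field_simp
    ring
  · rw [← hm_def, iteratedDeriv_two_const_mul_div_rpow_self _ _ hp.ne',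
      iteratedDeriv_two_const_mul_add_div_affine _ _ _ _ (hden pk hp), hγm]
    field_simp
    ring

/-- `φ` is twice continuously differentiable at the base pressure `σ = p_k`. -/
theorem laxPhi_contDiffAt_two
    (γ ρk pk : ℝ) (hγ : 1 < γ) (hρ : 0 < ρk) (hp : 0 < pk) :
    ContDiffAt ℝ 2 (laxPhi γ ρk pk) pk :=
  laxPhi_contDiffAt_two_general γ ρk pk hγ hp
end

section
/- Derivative of the mass flux along the 3-Lax curve at the base pressure: let γ > 1 and let (ρ_R, q_R, E_R) be a gas state with ρ_R > 0, velocity u_R = q_R/ρ_R, pressure p_R = (γ−1)(E_R − q_R²/(2ρ_R)) > 0 and sound speed c_R = √(γp_R/ρ_R). With ψ and φ the Lax-curve parametrisation functions based at (ρ_R, p_R), the mass-flux function Q(σ) := φ(σ)·(u_R + ψ(σ)) has derivative Q′(p_R) = (u_R + c_R)/c_R² at σ = p_R. -/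
/-- The velocity function `ψ` of the Lax-curve parametrisation. -/
noncomputable def laxPsi (γ ρ p : ℝ) (σ : ℝ) : ℝ :=
  if σ ≤ p then
    (2 * Real.sqrt (γ * p / ρ) / (γ - 1)) * ((σ / p) ^ ((γ - 1) / (2 * γ)) - 1)
  else
    (σ - p) * Real.sqrt ((1 - (γ - 1) / (γ + 1)) / (ρ * (σ + ((γ - 1) / (γ + 1)) * p)))

/-! At `σ = p_R` both branches of `φ` and of `ψ` meet with the same slope: `φ′(p_R) = 1/c_R²` and
`ψ′(p_R) = 1/(ρ_R c_R)`, the rarefaction branches by the power rule and the shock branches because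
`(1 - μ²)/(1 + μ²) = 1/γ`. Since `φ(p_R) = ρ_R` and `ψ(p_R) = 0`, the product rule gives
`Q′(p_R) = u_R/c_R² + 1/c_R`. -/

open Set

theorem HasDerivAt.ite_le {E : Type*} [NormedAddCommGroup E] [NormedSpace ℝ E]
    {f g : ℝ → E} {f' : E} {a : ℝ} (hf : HasDerivAt f f' a) (hg : HasDerivAt g f' a)
    (hfg : f a = g a) : HasDerivAt (fun x => if x ≤ a then f x else g x) f' a := by
  have hleft : HasDerivWithinAt (fun x => if x ≤ a then f x else g x) f' (Iic a) a :=
    hf.hasDerivWithinAt.congr (fun x hx => if_pos hx) (if_pos le_rfl)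
  have hright : HasDerivWithinAt (fun x => if x ≤ a then f x else g x) f' (Ioi a) a :=
    hg.hasDerivWithinAt.congr (fun x hx => if_neg (not_le.mpr hx)) (by rw [if_pos le_rfl, hfg])
  rw [← hasDerivWithinAt_univ, ← Iic_union_Ici]
  exact hleft.union (hasDerivWithinAt_Ioi_iff_Ici.mp hright)

theorem hasDerivAt_sub_mul_of_continuousAt {𝕜 : Type*} [NontriviallyNormedField 𝕜]
    {k : 𝕜 → 𝕜} {a : 𝕜} (hk : ContinuousAt k a) :
    HasDerivAt (fun x => (x - a) * k x) (k a) a := by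
  rw [hasDerivAt_iff_tendsto_slope]
  refine (hk.mono_left nhdsWithin_le_nhds).congr' ?_
  filter_upwards [self_mem_nhdsWithin] with x hx
  rw [slope_def_field, sub_self, zero_mul, sub_zero, mul_div_cancel_left₀ _ (sub_ne_zero.mpr hx)]

theorem hasDerivAt_div_rpow_self (e : ℝ) {p : ℝ} (hp : p ≠ 0) :
    HasDerivAt (fun σ : ℝ => (σ / p) ^ e) (e / p) p := by
  have h := ((hasDerivAt_id p).div_const p).rpow_const (p := e) (Or.inl (by simp [hp]))
  simp only [id, div_self hp, Real.one_rpow, mul_one] at h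
  exact h.congr_deriv (by ring)

section LaxCurve

variable {γ ρ p : ℝ}

theorem laxPhi_self (hp : p ≠ 0) : laxPhi γ ρ p p = ρ := by
  simp [laxPhi, div_self hp]

theorem laxPsi_self (hp : p ≠ 0) : laxPsi γ ρ p p = 0 := by
  simp [laxPsi, div_self hp]

theorem lax_shock_denominator_eq (hγ : γ + 1 ≠ 0) :
    (γ - 1) / (γ + 1) * p + p = 2 * γ * p / (γ + 1) := by
  field_simp
  ring

theorem hasDerivAt_laxPhi_self (hγ : 0 < γ) (hp : 0 < p) :
    HasDerivAt (laxPhi γ ρ p) (ρ / (γ * p)) p := by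
  have hγ1 : γ + 1 ≠ 0 := by positivity
  have hden : (γ - 1) / (γ + 1) * p + p ≠ 0 := by
    rw [lax_shock_denominator_eq hγ1]
    positivity
  have hrarefaction : HasDerivAt (fun σ => ρ * (σ / p) ^ (1 / γ)) (ρ / (γ * p)) p := by
    refine ((hasDerivAt_div_rpow_self (1 / γ) hp.ne').const_mul ρ).congr_deriv ?_
    field_simp
  have hshock : HasDerivAt (fun σ => ρ * (σ + (γ - 1) / (γ + 1) * p) / ((γ - 1) / (γ + 1) * σ + p))
      (ρ / (γ * p)) p := by
    refine ((((hasDerivAt_id p).add_const _).const_mul ρ).div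
      (((hasDerivAt_id p).const_mul _).add_const p) hden).congr_deriv ?_
    simp only [id, mul_one]
    rw [add_comm p, lax_shock_denominator_eq hγ1]
    field_simp
    ring
  refine hrarefaction.ite_le hshock ?_
  rw [div_self hp.ne', Real.one_rpow, add_comm p, mul_div_assoc, div_self hden, mul_one]

theorem hasDerivAt_laxPsi_self (hγ : 1 < γ) (hρ : 0 < ρ) (hp : 0 < p) :
    HasDerivAt (laxPsi γ ρ p) (√(γ * p / ρ) / (γ * p)) p := by
  have hγ0 : γ ≠ 0 := (zero_lt_one.trans hγ).ne'
  have hγ1 : γ + 1 ≠ 0 := by positivity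
  have hrarefaction : HasDerivAt
      (fun σ => 2 * √(γ * p / ρ) / (γ - 1) * ((σ / p) ^ ((γ - 1) / (2 * γ)) - 1))
      (√(γ * p / ρ) / (γ * p)) p := by
    refine (((hasDerivAt_div_rpow_self _ hp.ne').sub_const 1).const_mul _).congr_deriv ?_
    have hγsub : γ - 1 ≠ 0 := sub_ne_zero.mpr hγ.ne'
    field_simp
  have hden : 0 < ρ * (p + (γ - 1) / (γ + 1) * p) := by
    rw [add_comm p, lax_shock_denominator_eq hγ1]
    positivity
  have hk : ContinuousAt
      (fun σ => √((1 - (γ - 1) / (γ + 1)) / (ρ * (σ + (γ - 1) / (γ + 1) * p)))) p :=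
    (continuousAt_const.div (continuousAt_const.mul (continuousAt_id.add continuousAt_const))
      hden.ne').sqrt
  have hshock : HasDerivAt
      (fun σ => (σ - p) * √((1 - (γ - 1) / (γ + 1)) / (ρ * (σ + (γ - 1) / (γ + 1) * p))))
      (√(γ * p / ρ) / (γ * p)) p := by
    refine (hasDerivAt_sub_mul_of_continuousAt hk).congr_deriv ?_
    have hsq : (1 - (γ - 1) / (γ + 1)) / (ρ * (p + (γ - 1) / (γ + 1) * p)) =
        γ * p / ρ / (γ * p) ^ 2 := by
      rw [add_comm p, lax_shock_denominator_eq hγ1]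
      field_simp
      ring
    rw [hsq, Real.sqrt_div' _ (sq_nonneg _), Real.sqrt_sq (by positivity)]
  refine hrarefaction.ite_le hshock ?_
  rw [div_self hp.ne', Real.one_rpow, sub_self, sub_self, mul_zero, zero_mul]

end LaxCurve

theorem lax3_massFlux_deriv_at_base_general
    (γ : ℝ) (hγ : 1 < γ)
    (ρR uR pR cR : ℝ) (hρ : 0 < ρR)
    (hp : 0 < pR)
    (hcR : cR = Real.sqrt (γ * pR / ρR)) :
    HasDerivAt (fun σ : ℝ => laxPhi γ ρR pR σ * (uR + laxPsi γ ρR pR σ))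
      ((uR + cR) / cR ^ 2) pR := by
  have hQ := (hasDerivAt_laxPhi_self (ρ := ρR) (zero_lt_one.trans hγ) hp).mul
    ((hasDerivAt_laxPsi_self hγ hρ hp).const_add uR)
  rw [laxPhi_self hp.ne', laxPsi_self hp.ne', ← hcR] at hQ
  have hc2 : cR ^ 2 = γ * pR / ρR := by
    rw [hcR, Real.sq_sqrt (by positivity)]
  refine hQ.congr_deriv ?_
  rw [hc2]
  field_simp
  ring

/-- Derivative of the mass flux `Q(σ) = φ(σ)·(u_R + ψ(σ))` along the 3-Lax curve at the
base pressure: `Q′(p_R) = (u_R + c_R)/c_R² = λ₃/c_R²`. -/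
theorem lax3_massFlux_deriv_at_base
    (γ : ℝ) (hγ : 1 < γ)
    (ρR qR ER uR pR cR : ℝ) (hρ : 0 < ρR)
    (huR : uR = qR / ρR)
    (hpR : pR = (γ - 1) * (ER - qR ^ 2 / (2 * ρR))) (hp : 0 < pR)
    (hcR : cR = Real.sqrt (γ * pR / ρR)) :
    HasDerivAt (fun σ : ℝ => laxPhi γ ρR pR σ * (uR + laxPsi γ ρR pR σ))
      ((uR + cR) / cR ^ 2) pR :=
  lax3_massFlux_deriv_at_base_general γ hγ ρR uR pR cR hρ hp hcR
end
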